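/- Let S be a symmetric Seidel matrix of order n = 4k-1 with k ≥ 3 whose characteristic polynomial is (x-α)(x-β)(x-γ)(x² - ρ²)^{2(k-1)} with |α|, |β|, |γ| < ρ. Then ρ² ≠ 4k - 1. -/

import Mathlib

open Matrix Polynomial

/-- `S` is a principal submatrix of `Q`. -/
def IsPrincipalSubmatrix {m n : ℕ} (S : Matrix (Fin m) (Fin m) ℝ)
    (Q : Matrix (Fin n) (Fin n) ℝ) : Prop :=
  ∃ f : Fin m → Fin n, StrictMono f ∧ ∀ i j, S i j = Q (f i) (f j)

/-- `Q` is quasi-orthogonal: `Qᵀ * Q = q • 1` for some `q > 0`. -/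
def IsQuasiOrthogonal {n : ℕ} (Q : Matrix (Fin n) (Fin n) ℝ) : Prop :=
  ∃ q : ℝ, 0 < q ∧ Qᵀ * Q = q • (1 : Matrix (Fin n) (Fin n) ℝ)

/-- algebraic multiplicity of `lam` as an eigenvalue of `S` (0 if not a root). -/
noncomputable def eigMult {n : ℕ} (S : Matrix (Fin n) (Fin n) ℝ) (lam : ℝ) : ℕ :=
  (Matrix.charpoly S).rootMultiplicity lam

/-- `ρ` is the spectral radius of the real matrix `S`. -/
def IsSpectralRadius {n : ℕ} (S : Matrix (Fin n) (Fin n) ℝ) (ρ : ℝ) : Prop :=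
  ((Matrix.charpoly S).IsRoot ρ ∨ (Matrix.charpoly S).IsRoot (-ρ)) ∧
    ∀ lam : ℝ, (Matrix.charpoly S).IsRoot lam → |lam| ≤ ρ

/-- quasi-orthogonality index: least `d` such that `S` is a principal submatrix of a
symmetric quasi-orthogonal matrix of order `n + d`. -/
noncomputable def qIndex {n : ℕ} (S : Matrix (Fin n) (Fin n) ℝ) : ℕ :=
  sInf {d : ℕ | ∃ Q : Matrix (Fin (n + d)) (Fin (n + d)) ℝ,
    Q.IsSymm ∧ IsQuasiOrthogonal Q ∧ IsPrincipalSubmatrix S Q}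

/-- symmetric Seidel matrix: zero diagonal, off-diagonal entries `±1`. -/
def IsSeidel {n : ℕ} (S : Matrix (Fin n) (Fin n) ℝ) : Prop :=
  S.IsSymm ∧ (∀ i, S i i = 0) ∧ ∀ i j, i ≠ j → S i j = 1 ∨ S i j = -1

/-!
Compare power sums of the spectrum with the entries of `S²`, writing `n = 4k - 1`. If `ρ² = n`,
then `tr S² = n(n-1)` forces `α² + β² + γ² = 2n`. Off the diagonal, `(S²)ᵢⱼ` is a sum of `n - 2`
signs, hence an odd integer, so `tr S⁴ = ∑ᵢⱼ (S²)ᵢⱼ² ≥ n²(n-1)`, which forces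
`α⁴ + β⁴ + γ⁴ ≥ 2n²`. But three numbers below `n` that sum to `2n` have squares summing to less
than `2n²`.
-/

namespace Matrix

variable {n : Type*} [Fintype n]

lemma IsSymm.trace_mul_self {R : Type*} [Semiring R] {A : Matrix n n R} (hA : A.IsSymm) :
    (A * A).trace = ∑ i, ∑ j, A i j ^ 2 := by
  simp only [trace, diag, mul_apply]
  refine Finset.sum_congr rfl fun i _ => Finset.sum_congr rfl fun j _ => ?_
  rw [hA.apply j i, sq]

variable [DecidableEq n]

lemma IsHermitian.trace_pow_eq_sum_pow_roots_charpoly {A : Matrix n n ℝ} (hA : A.IsHermitian)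
    (p : ℕ) : (A ^ p).trace = (A.charpoly.roots.map (· ^ p)).sum := by
  have hcp : (A ^ p).charpoly = ∏ i, (X - C (hA.eigenvalues i ^ p)) := by
    simpa [cfc_pow_id A p hA.isSelfAdjoint] using hA.charpoly_cfc_eq (· ^ p)
  have hsplit : (A ^ p).charpoly.Splits := hcp ▸ Splits.prod fun i _ => Splits.X_sub_C _
  rw [trace_eq_sum_roots_charpoly_of_splits hsplit, hcp, hA.roots_charpoly_eq_eigenvalues,
    roots_prod _ _ (Finset.prod_ne_zero_iff.mpr fun i _ => X_sub_C_ne_zero _)]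
  simp only [roots_X_sub_C, Multiset.map_map, Multiset.bind_singleton]
  rfl

end Matrix

lemma roots_cubic_mul_X_sq_sub_C_pow (α β γ ρ : ℝ) (m : ℕ) :
    ((X - C α) * (X - C β) * (X - C γ) * (X ^ 2 - C (ρ ^ 2)) ^ m).roots
      = {α, β, γ} + m • {ρ, -ρ} := by
  have hfactor : X ^ 2 - C (ρ ^ 2) = (X - C ρ) * (X - C (-ρ)) := by
    simp only [map_pow, map_neg]; ring
  rw [← roots_multiset_prod_X_sub_C ({α, β, γ} + m • {ρ, -ρ}), hfactor]
  simp [Multiset.map_nsmul, Multiset.prod_nsmul, mul_assoc, sub_eq_add_neg]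

lemma sum_pow_roots_cubic_mul_X_sq_sub_C_pow (α β γ ρ : ℝ) (m : ℕ) {p : ℕ} (hp : Even p) :
    (((X - C α) * (X - C β) * (X - C γ) * (X ^ 2 - C (ρ ^ 2)) ^ m).roots.map (· ^ p)).sum
      = α ^ p + β ^ p + γ ^ p + 2 * m * ρ ^ p := by
  rw [roots_cubic_mul_X_sq_sub_C_pow]
  simp [Multiset.map_nsmul, Multiset.sum_nsmul, hp.neg_pow]
  ring

lemma Finset.one_le_sq_sum_of_odd_card {ι R : Type*} [CommRing R] [LinearOrder R]
    [IsStrictOrderedRing R] {s : Finset ι} {f : ι → R}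
    (hs : Odd s.card) (hf : ∀ x ∈ s, f x = 1 ∨ f x = -1) : 1 ≤ (∑ x ∈ s, f x) ^ 2 := by
  classical
  have hparity : ∃ z : ℤ, ∑ x ∈ s, f x = z ∧ Even (z + s.card) := by
    clear hs
    induction s using Finset.induction_on with
    | empty => exact ⟨0, by simp⟩
    | insert a s ha ih =>
      obtain ⟨z, hz, heven⟩ := ih fun x hx => hf x (Finset.mem_insert_of_mem hx)
      rcases hf a (Finset.mem_insert_self a s) with h | h
      · refine ⟨z + 1, by simp [Finset.sum_insert ha, h, hz, add_comm], ?_⟩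
        rw [Finset.card_insert_of_notMem ha]; push_cast
        rw [show z + 1 + ((s.card : ℤ) + 1) = z + s.card + 2 by ring]
        exact heven.add even_two
      · refine ⟨z - 1, by simp [Finset.sum_insert ha, h, hz, sub_eq_neg_add], ?_⟩
        rw [Finset.card_insert_of_notMem ha]; push_cast
        rwa [show z - 1 + ((s.card : ℤ) + 1) = z + s.card by ring]
  obtain ⟨z, hz, heven⟩ := hparity
  have hodd : Odd z := by
    have := heven.sub_odd (hs.natCast (R := ℤ))
    simpa using this
  rw [hz]
  have : z ≠ 0 := fun h => by simp [h] at hodd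
  have : 1 ≤ z ^ 2 := by nlinarith [Int.one_le_abs this, sq_abs z]
  exact_mod_cast this

namespace IsSeidel

variable {n : ℕ} {S : Matrix (Fin n) (Fin n) ℝ}

lemma mul_self_apply_self (hS : IsSeidel S) (i : Fin n) : (S * S) i i = n - 1 := by
  obtain ⟨hsymm, hdiag, hoff⟩ := hS
  have hterm : ∀ l, S i l * S l i = if l = i then 0 else 1 := by
    intro l
    split_ifs with h
    · subst h; simp [hdiag]
    · rw [hsymm.apply i l]
      rcases hoff i l (Ne.symm h) with h' | h' <;> rw [h'] <;> norm_num
  simp [mul_apply, hterm, Finset.sum_ite, Finset.filter_ne', Nat.cast_sub i.pos]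

lemma mul_self_apply_eq_sum_compl (hS : IsSeidel S) (i j : Fin n) :
    (S * S) i j = ∑ l ∈ ({i, j} : Finset (Fin n))ᶜ, S i l * S l j := by
  rw [mul_apply, ← Finset.sum_compl_add_sum {i, j}, add_eq_left]
  refine Finset.sum_eq_zero fun l hl => ?_
  rcases Finset.mem_insert.mp hl with rfl | hl
  · simp [hS.2.1]
  · simp [Finset.mem_singleton.mp hl, hS.2.1]

lemma one_le_sq_mul_self_apply (hS : IsSeidel S) (hn : Odd n) {i j : Fin n} (hij : i ≠ j) :
    1 ≤ (S * S) i j ^ 2 := by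
  rw [hS.mul_self_apply_eq_sum_compl]
  refine Finset.one_le_sq_sum_of_odd_card ?_ fun l hl => ?_
  · have h2 : 2 ≤ n := by simpa [Finset.card_pair hij] using Finset.card_le_univ {i, j}
    rw [Finset.card_compl, Finset.card_pair hij, Fintype.card_fin]
    exact Nat.Odd.sub_even h2 hn even_two
  · simp only [Finset.mem_compl, Finset.mem_insert, Finset.mem_singleton, not_or] at hl
    rcases hS.2.2 i l (Ne.symm hl.1) with h | h <;>
      rcases hS.2.2 l j hl.2 with h' | h' <;> simp [h, h']

lemma trace_sq (hS : IsSeidel S) : (S ^ 2).trace = n * (n - 1) := by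
  simp only [trace, sq, diag_apply, hS.mul_self_apply_self, Finset.sum_const, Finset.card_univ,
    Fintype.card_fin, nsmul_eq_mul]

lemma sq_mul_sub_one_le_trace_pow_four (hS : IsSeidel S) (hn : Odd n) :
    (n : ℝ) ^ 2 * (n - 1) ≤ (S ^ 4).trace := by
  have hsymm : (S * S).IsSymm := by
    rw [IsSymm, transpose_mul, hS.1.eq]
  have hrow : ∀ i, (n - 1 : ℝ) ^ 2 + (n - 1) ≤ ∑ j, (S * S) i j ^ 2 := by
    intro i
    rw [← Finset.add_sum_erase _ _ (Finset.mem_univ i), hS.mul_self_apply_self]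
    gcongr
    calc (n - 1 : ℝ) = ∑ j ∈ Finset.univ.erase i, 1 := by simp [Nat.cast_sub i.pos]
      _ ≤ _ := Finset.sum_le_sum fun j hj =>
        hS.one_le_sq_mul_self_apply hn (Finset.ne_of_mem_erase hj).symm
  calc (n : ℝ) ^ 2 * (n - 1)
      = ∑ _i : Fin n, ((n - 1 : ℝ) ^ 2 + (n - 1)) := by
        rw [Finset.sum_const, Finset.card_univ, Fintype.card_fin, nsmul_eq_mul]; ring
    _ ≤ _ := Finset.sum_le_sum fun i _ => hrow i
    _ = (S ^ 4).trace := by rw [← hsymm.trace_mul_self]; congr 1; noncomm_ring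

end IsSeidel

lemma sq_add_sq_add_sq_lt_two_mul_sq {a b c m : ℝ} (ha : a < m) (hb : b < m) (hc : c < m)
    (hsum : a + b + c = 2 * m) : a ^ 2 + b ^ 2 + c ^ 2 < 2 * m ^ 2 := by
  nlinarith [mul_pos (sub_pos.mpr ha) (sub_pos.mpr hb), mul_pos (sub_pos.mpr hb) (sub_pos.mpr hc),
    mul_pos (sub_pos.mpr ha) (sub_pos.mpr hc)]

theorem stmt14 {k : ℕ} (hk : 3 ≤ k)
    (S : Matrix (Fin (4 * k - 1)) (Fin (4 * k - 1)) ℝ) (hS : IsSeidel S)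
    (α β γ ρ : ℝ) (hα : |α| < ρ) (hβ : |β| < ρ) (hγ : |γ| < ρ)
    (hchar : S.charpoly =
      (X - C α) * (X - C β) * (X - C γ) * (X ^ 2 - C (ρ ^ 2)) ^ (2 * (k - 1))) :
    ρ ^ 2 ≠ 4 * (k : ℝ) - 1 := by
  intro hρ
  have hn : Odd (4 * k - 1) := ⟨2 * k - 1, by omega⟩
  have hn_cast : ((4 * k - 1 : ℕ) : ℝ) = ρ ^ 2 := by
    rw [hρ]; push_cast [Nat.cast_sub (by omega : 1 ≤ 4 * k)]; ring
  have hm_cast : 2 * ((2 * (k - 1) : ℕ) : ℝ) = ρ ^ 2 - 3 := by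
    rw [hρ]; push_cast [Nat.cast_sub (by omega : 1 ≤ k)]; ring
  have htrace (p : ℕ) (hp : Even p) :
      (S ^ p).trace = α ^ p + β ^ p + γ ^ p + 2 * ((2 * (k - 1) : ℕ) : ℝ) * ρ ^ p := by
    rw [(isHermitian_iff_isSymm.mpr hS.1).trace_pow_eq_sum_pow_roots_charpoly, hchar,
      sum_pow_roots_cubic_mul_X_sq_sub_C_pow _ _ _ _ _ hp]
  have h2 := hS.trace_sq
  have h4 := hS.sq_mul_sub_one_le_trace_pow_four hn
  rw [htrace 2 even_two, hm_cast, hn_cast] at h2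
  rw [htrace 4 ⟨2, rfl⟩, hm_cast, hn_cast] at h4
  have hsq_lt (x : ℝ) (hx : |x| < ρ) : x ^ 2 < ρ ^ 2 :=
    sq_lt_sq' (abs_lt.mp hx).1 (abs_lt.mp hx).2
  have := sq_add_sq_add_sq_lt_two_mul_sq (hsq_lt α hα) (hsq_lt β hβ) (hsq_lt γ hγ)
    (by linear_combination h2)
  linarith
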